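/- arXiv:0911.1167 — 4 statements merged into one kernel-verified Lean document; each statement's English description precedes it below -/
import Mathlib

section
/- The map σ(z, w₂, w₃) = (w₃, -w₂ + z·w₃ + 1, z) preserves the real submanifold M ⊂ ℂ³ defined by Im w₂ = Re z / Im z + γ · ln(Im z) and Im w₃ = 1 / Im z (for points with Im z > 0), for every real parameter γ. That is, if (z, w₂, w₃) satisfies both defining equations with Im z > 0, then so does σ(z, w₂, w₃). -/
/-- σ(z,w₂,w₃) = (w₃, -w₂+z·w₃+1, z) preserves the surface
    Im w₂ = Re z / Im z + γ ln (Im z), Im w₃ = 1 / Im z (where Im z > 0). -/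
theorem sigma_preserves_Ib (γ : ℝ) (z w₂ w₃ : ℂ)
    (hy : 0 < z.im)
    (h₂ : w₂.im = z.re / z.im + γ * Real.log z.im)
    (h₃ : w₃.im = 1 / z.im) :
    0 < w₃.im ∧
    (-w₂ + z * w₃ + 1).im = w₃.re / w₃.im + γ * Real.log w₃.im ∧
    z.im = 1 / w₃.im := by
  have hlog : Real.log w₃.im = -Real.log z.im := by rw [h₃, one_div, Real.log_inv]
  refine ⟨h₃ ▸ one_div_pos.mpr hy, ?_, by rw [h₃, one_div_one_div]⟩
  simp only [Complex.add_im, Complex.neg_im, Complex.mul_im, Complex.one_im]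
  rw [hlog, h₂, h₃]
  field_simp
  ring
end

section
/- The cubic {(z, w₂, w₃) ∈ ℂ³ : Im w₂ = |z|², Im w₃ = 2|z|²·Re z} is mapped biholomorphically onto the tube {(z, w₂, w₃) : Im w₂ = (Im z)², Im w₃ = (Im z)³} by a polynomial transformation. Specifically, there exists a polynomial biholomorphism of ℂ³ carrying the first surface onto the second. -/
/-- F : ℂ³ → ℂ³ is a polynomial map. -/
def IsPolyMap (F : ℂ × ℂ × ℂ → ℂ × ℂ × ℂ) : Prop :=
  ∃ P₁ P₂ P₃ : MvPolynomial (Fin 3) ℂ, ∀ p : ℂ × ℂ × ℂ,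
    F p = (MvPolynomial.eval ![p.1, p.2.1, p.2.2] P₁,
           MvPolynomial.eval ![p.1, p.2.1, p.2.2] P₂,
           MvPolynomial.eval ![p.1, p.2.1, p.2.2] P₃)

/-!
Put `ζ = i z`, so that `Im ζ = Re z` and `|ζ| = |z|`. The real identities
`(Im ζ)² = (|ζ|² - Re ζ²) / 2` and `(Im ζ)³ = (3 |ζ|² Im ζ - Im ζ³) / 4`
express the tube's defining functions through `|ζ|²`, `|ζ|² Im ζ` and the pluriharmonic
functions `Re ζ² = Im (i ζ²)`, `Im ζ³`. Hence the triangular polynomial map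
`(z, w₂, w₃) ↦ (ζ, (w₂ - i ζ²) / 2, (3 w₃ / 2 - ζ³) / 4)` carries the cubic onto the
tube, and its inverse is again polynomial.
-/

namespace CubicTube

open Complex MvPolynomial

noncomputable def polyFunctions : Subalgebra ℂ (ℂ × ℂ × ℂ → ℂ) :=
  (aeval fun i (p : ℂ × ℂ × ℂ) => ![p.1, p.2.1, p.2.2] i).range

theorem exists_eval_eq_of_mem_polyFunctions {f : ℂ × ℂ × ℂ → ℂ}
    (hf : f ∈ polyFunctions) :
    ∃ P : MvPolynomial (Fin 3) ℂ, ∀ p, f p = eval ![p.1, p.2.1, p.2.2] P := by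
  obtain ⟨P, rfl⟩ := hf
  refine ⟨P, fun p => ?_⟩
  change Pi.evalAlgHom ℂ (fun _ => ℂ) p (aeval _ P) = _
  rw [← AlgHom.comp_apply, comp_aeval]
  rfl

theorem isPolyMap_of_mem_polyFunctions {F : ℂ × ℂ × ℂ → ℂ × ℂ × ℂ}
    (h₁ : (fun p => (F p).1) ∈ polyFunctions) (h₂ : (fun p => (F p).2.1) ∈ polyFunctions)
    (h₃ : (fun p => (F p).2.2) ∈ polyFunctions) : IsPolyMap F := by
  obtain ⟨P₁, hP₁⟩ := exists_eval_eq_of_mem_polyFunctions h₁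
  obtain ⟨P₂, hP₂⟩ := exists_eval_eq_of_mem_polyFunctions h₂
  obtain ⟨P₃, hP₃⟩ := exists_eval_eq_of_mem_polyFunctions h₃
  exact ⟨P₁, P₂, P₃, fun p => Prod.ext (hP₁ p) (Prod.ext (hP₂ p) (hP₃ p))⟩

theorem fst_mem_polyFunctions : (fun p : ℂ × ℂ × ℂ => p.1) ∈ polyFunctions :=
  ⟨X 0, aeval_X _ _⟩

theorem snd_fst_mem_polyFunctions : (fun p : ℂ × ℂ × ℂ => p.2.1) ∈ polyFunctions :=
  ⟨X 1, aeval_X _ _⟩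

theorem snd_snd_mem_polyFunctions : (fun p : ℂ × ℂ × ℂ => p.2.2) ∈ polyFunctions :=
  ⟨X 2, aeval_X _ _⟩

theorem const_mem_polyFunctions (c : ℂ) :
    (fun _ => c : ℂ × ℂ × ℂ → ℂ) ∈ polyFunctions :=
  polyFunctions.algebraMap_mem c

/- The closure properties of a subalgebra, restated pointwise so that `apply_rules` can match
them against explicit formulas. -/
section Closure

variable {f g : ℂ × ℂ × ℂ → ℂ}

theorem add_mem_polyFunctions (hf : f ∈ polyFunctions) (hg : g ∈ polyFunctions) :
    (fun p => f p + g p) ∈ polyFunctions :=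
  add_mem hf hg

theorem sub_mem_polyFunctions (hf : f ∈ polyFunctions) (hg : g ∈ polyFunctions) :
    (fun p => f p - g p) ∈ polyFunctions :=
  sub_mem hf hg

theorem mul_mem_polyFunctions (hf : f ∈ polyFunctions) (hg : g ∈ polyFunctions) :
    (fun p => f p * g p) ∈ polyFunctions :=
  mul_mem hf hg

theorem pow_mem_polyFunctions (hf : f ∈ polyFunctions) (n : ℕ) :
    (fun p => f p ^ n) ∈ polyFunctions :=
  pow_mem hf n

theorem div_mem_polyFunctions (hf : f ∈ polyFunctions) (c : ℂ) :
    (fun p => f p / c) ∈ polyFunctions := by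
  simp_rw [div_eq_mul_inv]
  exact mul_mem hf (const_mem_polyFunctions c⁻¹)

end Closure

theorem _root_.Complex.im_sq_eq_norm_sq_sub_sq_re (ζ : ℂ) :
    ζ.im ^ 2 = (‖ζ‖ ^ 2 - (ζ ^ 2).re) / 2 := by
  rw [Complex.sq_norm, normSq_apply, pow_two ζ, mul_re]
  ring

theorem _root_.Complex.im_pow_three_eq_norm_sq_mul_im_sub_pow_three_im (ζ : ℂ) :
    ζ.im ^ 3 = (3 * ‖ζ‖ ^ 2 * ζ.im - (ζ ^ 3).im) / 4 := by
  rw [Complex.sq_norm, normSq_apply, pow_succ ζ, pow_two ζ, mul_im, mul_re, mul_im]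
  ring

def cubic : Set (ℂ × ℂ × ℂ) :=
  {p | p.2.1.im = ‖p.1‖ ^ 2 ∧ p.2.2.im = 2 * ‖p.1‖ ^ 2 * p.1.re}

def tube : Set (ℂ × ℂ × ℂ) :=
  {p | p.2.1.im = p.1.im ^ 2 ∧ p.2.2.im = p.1.im ^ 3}

noncomputable def cubicToTube (p : ℂ × ℂ × ℂ) : ℂ × ℂ × ℂ :=
  (I * p.1, (p.2.1 - I * (I * p.1) ^ 2) / 2, (3 * p.2.2 / 2 - (I * p.1) ^ 3) / 4)

noncomputable def tubeToCubic (q : ℂ × ℂ × ℂ) : ℂ × ℂ × ℂ :=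
  (-I * q.1, 2 * q.2.1 + I * q.1 ^ 2, 2 * (4 * q.2.2 + q.1 ^ 3) / 3)

theorem isPolyMap_cubicToTube : IsPolyMap cubicToTube := by
  apply isPolyMap_of_mem_polyFunctions <;>
  apply_rules [fst_mem_polyFunctions, snd_fst_mem_polyFunctions, snd_snd_mem_polyFunctions,
    const_mem_polyFunctions, add_mem_polyFunctions, sub_mem_polyFunctions,
    mul_mem_polyFunctions, pow_mem_polyFunctions, div_mem_polyFunctions]

theorem isPolyMap_tubeToCubic : IsPolyMap tubeToCubic := by
  apply isPolyMap_of_mem_polyFunctions <;>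
  apply_rules [fst_mem_polyFunctions, snd_fst_mem_polyFunctions, snd_snd_mem_polyFunctions,
    const_mem_polyFunctions, add_mem_polyFunctions, sub_mem_polyFunctions,
    mul_mem_polyFunctions, pow_mem_polyFunctions, div_mem_polyFunctions]

theorem tubeToCubic_cubicToTube (p : ℂ × ℂ × ℂ) : tubeToCubic (cubicToTube p) = p := by
  obtain ⟨z, w₂, w₃⟩ := p
  have hz : -I * (I * z) = z := by linear_combination (-z) * I_sq
  simp only [cubicToTube, tubeToCubic, hz, Prod.mk.injEq, true_and]
  constructor <;> ring

theorem cubicToTube_tubeToCubic (q : ℂ × ℂ × ℂ) : cubicToTube (tubeToCubic q) = q := by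
  obtain ⟨ζ, w₂, w₃⟩ := q
  have hζ : I * (-I * ζ) = ζ := by linear_combination (-ζ) * I_sq
  simp only [cubicToTube, tubeToCubic, hζ, Prod.mk.injEq, true_and]
  constructor <;> ring

theorem cubicToTube_mem_tube_iff {p : ℂ × ℂ × ℂ} :
    cubicToTube p ∈ tube ↔ p ∈ cubic := by
  obtain ⟨z, w₂, w₃⟩ := p
  have him : (I * z).im = z.re := by simp
  have hnorm : ‖I * z‖ = ‖z‖ := by simp
  have h₂ : ((w₂ - I * (I * z) ^ 2) / 2).im = (w₂.im - ((I * z) ^ 2).re) / 2 := by simp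
  have h₃ : ((3 * w₃ / 2 - (I * z) ^ 3) / 4).im = (3 * w₃.im / 2 - ((I * z) ^ 3).im) / 4 := by
    simp
  simp only [cubicToTube, tube, cubic, Set.mem_ofPred_eq, h₂, h₃, im_sq_eq_norm_sq_sub_sq_re,
    im_pow_three_eq_norm_sq_mul_im_sub_pow_three_im, him, hnorm]
  constructor <;> rintro ⟨_, _⟩ <;> constructor <;> linarith

theorem image_cubicToTube_cubic : cubicToTube '' cubic = tube := by
  have hcubic : cubic = cubicToTube ⁻¹' tube := Set.ext fun _ => cubicToTube_mem_tube_iff.symm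
  rw [hcubic, Set.image_preimage_eq _ (Function.RightInverse.surjective cubicToTube_tubeToCubic)]

end CubicTube

/-- The cubic Im w₂ = |z|², Im w₃ = 2|z|²Re z is polynomially biholomorphic to the
    tube Im w₂ = (Im z)², Im w₃ = (Im z)³. -/
theorem cubic_poly_equiv_tube :
    ∃ F G : ℂ × ℂ × ℂ → ℂ × ℂ × ℂ,
      IsPolyMap F ∧ IsPolyMap G ∧
      (∀ p, G (F p) = p) ∧ (∀ p, F (G p) = p) ∧
      F '' {p : ℂ × ℂ × ℂ |
              p.2.1.im = ‖p.1‖ ^ 2 ∧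
              p.2.2.im = 2 * ‖p.1‖ ^ 2 * p.1.re} =
        {p : ℂ × ℂ × ℂ | p.2.1.im = p.1.im ^ 2 ∧ p.2.2.im = p.1.im ^ 3} := by
  open CubicTube in
  exact ⟨cubicToTube, tubeToCubic, isPolyMap_cubicToTube, isPolyMap_tubeToCubic,
    tubeToCubic_cubicToTube, cubicToTube_tubeToCubic, image_cubicToTube_cubic⟩
end

section
/- For the tube surface M = {(z, w₂, w₃) ∈ ℂ³ : Im w₂ = cos(Im z), Im w₃ = sin(Im z)}, the abelian group ℝ³ of real translations (z, w₂, w₃) ↦ (z + a₁, w₂ + a₂, w₃ + a₃), together with the one-parameter group (z, w₂, w₃) ↦ (z + t, cos t · w₂ − sin t · w₃, sin t · w₂ + cos t · w₃), acts on M by CR-automorphisms (i.e., each such map preserves M), and the combined group acts transitively on M. -/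
/-!
A point of `M` is determined, up to real parts, by `Im z`: its imaginary parts are
`(s, cos s, sin s)` with `s = Im z`. The map `R t` shifts `s` by `t` and rotates
`(Im w₂, Im w₃)` by the angle `t`, which turns `(cos s, sin s)` into `(cos (s + t), sin (s + t))`;
hence `M` is preserved. To send `p` to `q`, the rotation with `t = Im q.1 - Im p.1` matches all
imaginary parts of `q`, after which a real translation matches the real parts.
-/

namespace CosSinTube

def tube : Set (ℂ × ℂ × ℂ) :=
  {p | p.2.1.im = Real.cos p.1.im ∧ p.2.2.im = Real.sin p.1.im}

def translate (a₁ a₂ a₃ : ℝ) (p : ℂ × ℂ × ℂ) : ℂ × ℂ × ℂ :=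
  (p.1 + (a₁ : ℂ), p.2.1 + (a₂ : ℂ), p.2.2 + (a₃ : ℂ))

noncomputable def rotate (t : ℝ) (p : ℂ × ℂ × ℂ) : ℂ × ℂ × ℂ :=
  (p.1 + Complex.I * (t : ℂ),
   (Real.cos t : ℂ) * p.2.1 - (Real.sin t : ℂ) * p.2.2,
   (Real.sin t : ℂ) * p.2.1 + (Real.cos t : ℂ) * p.2.2)

theorem translate_mem_tube {p : ℂ × ℂ × ℂ} (hp : p ∈ tube) (a₁ a₂ a₃ : ℝ) :
    translate a₁ a₂ a₃ p ∈ tube := by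
  simpa [tube, translate] using hp

theorem rotate_fst_im (t : ℝ) (p : ℂ × ℂ × ℂ) : (rotate t p).1.im = p.1.im + t := by
  simp [rotate]

theorem rotate_mem_tube {p : ℂ × ℂ × ℂ} (hp : p ∈ tube) (t : ℝ) : rotate t p ∈ tube := by
  obtain ⟨h₂, h₃⟩ := hp
  refine ⟨?_, ?_⟩ <;>
    simp only [rotate_fst_im, Real.cos_add, Real.sin_add] <;>
    simp only [rotate, Complex.sub_im, Complex.add_im, Complex.im_ofReal_mul, h₂, h₃] <;>
    ring

theorem translate_re_sub {p q : ℂ × ℂ × ℂ} (h₁ : p.1.im = q.1.im) (h₂ : p.2.1.im = q.2.1.im)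
    (h₃ : p.2.2.im = q.2.2.im) :
    translate (q.1.re - p.1.re) (q.2.1.re - p.2.1.re) (q.2.2.re - p.2.2.re) p = q := by
  ext <;> simp [translate, Complex.ext_iff, *]

theorem exists_translate_eq_of_fst_im_eq {p q : ℂ × ℂ × ℂ} (hp : p ∈ tube) (hq : q ∈ tube)
    (h : p.1.im = q.1.im) : ∃ a₁ a₂ a₃ : ℝ, translate a₁ a₂ a₃ p = q :=
  ⟨_, _, _, translate_re_sub h (by rw [hp.1, hq.1, h]) (by rw [hp.2, hq.2, h])⟩

end CosSinTube

open CosSinTube in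
/-- Homogeneity of the tube M : Im w₂ = cos(Im z), Im w₃ = sin(Im z): the real
    translations and the one-parameter affine group
    (z, w₂, w₃) ↦ (z + it, cos t·w₂ - sin t·w₃, sin t·w₂ + cos t·w₃)
    preserve M and together act transitively on M. -/
theorem tube_cos_sin_homogeneous :
    let M : Set (ℂ × ℂ × ℂ) :=
      {p | p.2.1.im = Real.cos p.1.im ∧ p.2.2.im = Real.sin p.1.im}
    let T : ℝ → ℝ → ℝ → (ℂ × ℂ × ℂ) → (ℂ × ℂ × ℂ) := fun a₁ a₂ a₃ p =>
      (p.1 + (a₁ : ℂ), p.2.1 + (a₂ : ℂ), p.2.2 + (a₃ : ℂ))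
    let R : ℝ → (ℂ × ℂ × ℂ) → (ℂ × ℂ × ℂ) := fun t p =>
      (p.1 + Complex.I * (t : ℂ),
       (Real.cos t : ℂ) * p.2.1 - (Real.sin t : ℂ) * p.2.2,
       (Real.sin t : ℂ) * p.2.1 + (Real.cos t : ℂ) * p.2.2)
    (∀ a₁ a₂ a₃ : ℝ, ∀ p ∈ M, T a₁ a₂ a₃ p ∈ M) ∧
    (∀ t : ℝ, ∀ p ∈ M, R t p ∈ M) ∧
    (∀ p ∈ M, ∀ q ∈ M, ∃ t a₁ a₂ a₃ : ℝ, T a₁ a₂ a₃ (R t p) = q) := by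
  refine ⟨fun a₁ a₂ a₃ p hp => translate_mem_tube hp a₁ a₂ a₃,
    fun t p hp => rotate_mem_tube hp t, fun p hp q hq => ?_⟩
  have h : (rotate (q.1.im - p.1.im) p).1.im = q.1.im := by
    rw [rotate_fst_im]; ring
  exact ⟨_, exists_translate_eq_of_fst_im_eq (rotate_mem_tube hp _) hq h⟩
end

section
/- For the map Φ(z, w₂, w₃) = (z, 2w₂ − z·w₃, w₃) of ℂ³, the pushforward of the vector field X₄ = (qz − w₃)·∂/∂z + (2qw₂ + z²/2 − w₃²/2)·∂/∂w₂ + (z + qw₃)·∂/∂w₃ under Φ equals the affine vector field (qz − w₃)·∂/∂z + 2q·w₂·∂/∂w₂ + (z + qw₃)·∂/∂w₃ in the new coordinates. -/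
theorem fderiv_triangularMap_apply {𝕜 : Type*} [NontriviallyNormedField 𝕜] (p v : 𝕜 × 𝕜 × 𝕜) :
    fderiv 𝕜 (fun p : 𝕜 × 𝕜 × 𝕜 => (p.1, 2 * p.2.1 - p.1 * p.2.2, p.2.2)) p v =
      (v.1, 2 * v.2.1 - (p.1 * v.2.2 + p.2.2 * v.1), v.2.2) := by
  have hz : HasFDerivAt (fun p : 𝕜 × 𝕜 × 𝕜 => p.1) (ContinuousLinearMap.fst 𝕜 𝕜 (𝕜 × 𝕜)) p :=
    hasFDerivAt_fst
  have hw : HasFDerivAt (fun p : 𝕜 × 𝕜 × 𝕜 => p.2) (ContinuousLinearMap.snd 𝕜 𝕜 (𝕜 × 𝕜)) p :=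
    hasFDerivAt_snd
  have hΦ : HasFDerivAt (fun p : 𝕜 × 𝕜 × 𝕜 => (p.1, 2 * p.2.1 - p.1 * p.2.2, p.2.2)) _ p :=
    hz.prodMk (((hw.fst.const_mul 2).sub (hz.mul hw.snd)).prodMk hw.snd)
  rw [hΦ.fderiv]
  simp

/-- Under Φ(z,w₂,w₃) = (z, 2w₂ - z·w₃, w₃), the field
    X₄ = (qz - w₃)∂z + (2qw₂ + z²/2 - w₃²/2)∂w₂ + (z + qw₃)∂w₃ pushes forward to the
    affine field (qz - w₃)∂z + 2qw₂∂w₂ + (z + qw₃)∂w₃. -/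
theorem pushforward_typeIIIb (q : ℝ) :
    let Φ : ℂ × ℂ × ℂ → ℂ × ℂ × ℂ := fun p => (p.1, 2 * p.2.1 - p.1 * p.2.2, p.2.2)
    let X : ℂ × ℂ × ℂ → ℂ × ℂ × ℂ := fun p =>
      ((q : ℂ) * p.1 - p.2.2,
       2 * (q : ℂ) * p.2.1 + p.1 ^ 2 / 2 - p.2.2 ^ 2 / 2,
       p.1 + (q : ℂ) * p.2.2)
    let Y : ℂ × ℂ × ℂ → ℂ × ℂ × ℂ := fun p =>
      ((q : ℂ) * p.1 - p.2.2, 2 * (q : ℂ) * p.2.1, p.1 + (q : ℂ) * p.2.2)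
    ∀ p : ℂ × ℂ × ℂ, fderiv ℂ Φ p (X p) = Y (Φ p) := by
  intro Φ X Y p
  rw [fderiv_triangularMap_apply]
  -- Only the ∂w₂ component is not literally equal: there the quadratic terms of X cancel
  -- against those produced by the product z·w₃.
  refine Prod.ext rfl (Prod.ext ?_ rfl)
  simp only [X, Y, Φ]
  ring
end
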